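/- Let d > 0 and c be real numbers and let λ₁, …, λ_k (with k ≥ 1) be nonzero complex numbers. If c·d^n + ∑_{j=1}^k Re(λ_j^n) ≤ 0 for every integer n ≥ 1, then c < 0. -/

import Mathlib

/-!
Suppose `c ≥ 0`. Writing `λ_j = |λ_j| e^{iθ_j}`, the point `(e^{iθ_j})_j` of the compact torus
`(S¹)^k` has a positive power `n` in every neighbourhood of `1`, in particular in the one where
each coordinate has positive real part. For that `n` every `Re(λ_j^n)` is positive, so
`c·d^n + ∑_j Re(λ_j^n) > 0`.
-/

open Filter Topology

theorem exists_pow_mem_of_mem_nhds_one {G : Type*} [Group G] [TopologicalSpace G]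
    [IsTopologicalGroup G] [CompactSpace G] (g : G) {U : Set G} (hU : U ∈ 𝓝 1) :
    ∃ n, 0 < n ∧ g ^ n ∈ U := by
  obtain ⟨V, hV, hVU⟩ := exists_nhds_split_inv hU
  have hVinv : V⁻¹ ∈ 𝓝 (1 : G) := inv_mem_nhds_one G hV
  obtain ⟨t, ht⟩ := compact_covered_by_mul_left_translates isCompact_univ
    ⟨1, mem_interior_iff_mem_nhds.2 hVinv⟩
  have hcover : ∀ n : ℕ, ∃ x : t, x * g ^ n ∈ V⁻¹ := fun n ↦ by
    simpa using ht (Set.mem_univ (g ^ n))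
  choose x hx using hcover
  -- pigeonhole: two powers of `g` lie in the same translate of `V⁻¹`
  obtain ⟨a, b, hab, hxab⟩ := Finite.exists_ne_map_eq_of_infinite x
  have hpow_mem : ∀ a m, x a = x (a + m) → g ^ m ∈ U := fun a m hx_eq ↦ by
    have h := hVU _ (hx a) _ (hx (a + m))
    rwa [hx_eq, div_inv_eq_mul, pow_add, mul_inv_rev, mul_assoc, inv_mul_cancel_left,
      inv_mul_cancel_left] at h
  rcases hab.lt_or_gt with hlt | hlt
  · obtain ⟨m, rfl⟩ := Nat.exists_eq_add_of_lt hlt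
    exact ⟨m + 1, m.succ_pos, hpow_mem a _ (by rwa [← add_assoc])⟩
  · obtain ⟨m, rfl⟩ := Nat.exists_eq_add_of_lt hlt
    exact ⟨m + 1, m.succ_pos, hpow_mem b _ (by rw [← add_assoc, hxab])⟩

theorem Complex.re_pow_eq_norm_pow_mul (z : ℂ) (n : ℕ) :
    (z ^ n).re = ‖z‖ ^ n * ((Circle.exp (arg z) ^ n : Circle) : ℂ).re := by
  conv_lhs => rw [← norm_mul_exp_arg_mul_I z]
  rw [Circle.coe_pow, Circle.coe_exp, mul_pow, ← ofReal_pow, re_ofReal_mul]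

theorem exists_pow_re_pos {ι : Type*} [Finite ι] (z : ι → ℂ) (hz : ∀ i, z i ≠ 0) :
    ∃ n, 0 < n ∧ ∀ i, 0 < (z i ^ n).re := by
  have hU : {w : ι → Circle | ∀ i, 0 < (w i : ℂ).re} ∈ 𝓝 1 :=
    eventually_all.2 fun i ↦ ContinuousAt.eventually_lt continuousAt_const
      (Complex.continuous_re.comp (continuous_subtype_val.comp (continuous_apply i))).continuousAt
      (by simp)
  obtain ⟨n, hn, hpos⟩ := 
    exists_pow_mem_of_mem_nhds_one (fun i ↦ Circle.exp (Complex.arg (z i))) hU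
  refine ⟨n, hn, fun i ↦ ?_⟩
  rw [Complex.re_pow_eq_norm_pow_mul]
  exact mul_pos (pow_pos (norm_pos_iff.2 (hz i)) n) (hpos i)

/-- If `c·d^n + ∑_j Re(λ_j^n) ≤ 0` for all `n ≥ 1`, with `d > 0` and the `λ_j`
nonzero complex numbers (`k ≥ 1`), then `c < 0`. -/
theorem neg_of_le_zero_forall_pow (d c : ℝ) (hd : 0 < d) (k : ℕ) (hk : 1 ≤ k)
    (lam : Fin k → ℂ) (hlam : ∀ j, lam j ≠ 0)
    (h : ∀ n : ℕ, 1 ≤ n → c * d ^ n + ∑ j, (lam j ^ n).re ≤ 0) :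
    c < 0 := by
  by_contra! hc
  obtain ⟨n, hn, hre⟩ := exists_pow_re_pos lam hlam
  have : Nonempty (Fin k) := ⟨⟨0, hk⟩⟩
  have hsum : 0 < ∑ j, (lam j ^ n).re := Finset.sum_pos (fun j _ ↦ hre j) Finset.univ_nonempty
  have hcd : 0 ≤ c * d ^ n := mul_nonneg hc (pow_nonneg hd.le n)
  linarith [h n hn]
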